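/- arXiv:1607.07283 — 5 statements merged into one kernel-verified Lean document; each statement's English description precedes it below -/
import Mathlib

section
/- Let f : (0,∞) → (0,∞) be continuous, strictly decreasing with f(t) → ∞ as t → 0⁺, and suppose for some 0 < ε < d the function t ↦ t^(d-ε) f(t) is increasing on (0, t_ε]. Then for every r with 0 < 3r < t_ε, the integral ∫_{f(3r)}^{∞} (f⁻¹(u))^d du is finite and bounded above by C · r^d · f(2r), where C is a constant depending only on d and ε. -/
open MeasureTheory Set Filter Topology ENNReal

/-!
Write `t = f⁻¹(u)` for `u > f(3r)`, so that `0 < t < 3r`. Monotonicity of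
`t ^ (d - ε) * f t` gives `t ^ (d - ε) * u ≤ (3r) ^ (d - ε) * f(3r)`, i.e.
`t ^ d ≤ (3r) ^ d * (f(3r) / u) ^ p` with `p = d / (d - ε) > 1`. This power tail is integrable
on `(f(3r), ∞)` with integral `(3r) ^ d * f(3r) / (p - 1) = 3 ^ d * (d - ε) / ε * r ^ d * f(3r)`
(`p - 1 = ε / (d - ε)`), and `f(3r) ≤ f(2r)`.
-/

theorem exists_mem_Ioo_eq_of_tendsto_atTop {f : ℝ → ℝ} {a b u : ℝ} (hab : a < b)
    (hf : ContinuousOn f (Ioc a b)) (hlim : Tendsto f (𝓝[>] a) atTop) (hu : f b < u) :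
    ∃ t ∈ Ioo a b, f t = u := by
  obtain ⟨s, hus, hs⟩ := ((hlim.eventually_gt_atTop u).and (Ioo_mem_nhdsGT hab)).exists
  have hsub : Icc s b ⊆ Ioc a b := Icc_subset_Ioc_iff hs.2.le |>.mpr ⟨hs.1, le_rfl⟩
  obtain ⟨t, ht, hft⟩ := intermediate_value_Ioo' hs.2.le (hf.mono hsub) ⟨hu, hus⟩
  exact ⟨t, ⟨hs.1.trans ht.1, ht.2⟩, hft⟩

theorem invFunOn_Ioi_mem_Ioo_of_lt {f : ℝ → ℝ} {a b u : ℝ} (hcont : ContinuousOn f (Ioi a))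
    (hanti : StrictAntiOn f (Ioi a)) (hlim : Tendsto f (𝓝[>] a) atTop) (hab : a < b)
    (hu : f b < u) :
    Function.invFunOn f (Ioi a) u ∈ Ioo a b ∧ f (Function.invFunOn f (Ioi a) u) = u := by
  obtain ⟨t, ht, rfl⟩ :=
    exists_mem_Ioo_eq_of_tendsto_atTop hab (hcont.mono Ioc_subset_Ioi_self) hlim hu
  have hinv : Function.invFunOn f (Ioi a) (f t) = t := hanti.injOn.leftInvOn_invFunOn ht.1
  rw [hinv]
  exact ⟨ht, rfl⟩

theorem Real.rpow_le_mul_div_rpow_of_rpow_mul_le {t u a b q d : ℝ} (ht : 0 ≤ t) (hu : 0 < u)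
    (ha : 0 ≤ a) (hb : 0 ≤ b) (hq : 0 < q) (hd : 0 ≤ d) (h : t ^ q * u ≤ b ^ q * a) :
    t ^ d ≤ b ^ d * (a / u) ^ (d / q) := by
  have htq : t ^ q ≤ b ^ q * (a / u) := by
    rwa [← mul_div_assoc, le_div_iff₀ hu]
  calc t ^ d = (t ^ q) ^ (d / q) := by rw [← Real.rpow_mul ht, mul_div_cancel₀ _ hq.ne']
    _ ≤ (b ^ q * (a / u)) ^ (d / q) := by gcongr
    _ = b ^ d * (a / u) ^ (d / q) := by
      rw [Real.mul_rpow (by positivity) (by positivity), ← Real.rpow_mul hb,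
        mul_div_cancel₀ _ hq.ne']

theorem lintegral_Ioi_ofReal_mul_div_rpow {a p c : ℝ} (ha : 0 < a) (hp : 1 < p) (hc : 0 ≤ c) :
    ∫⁻ u in Ioi a, ENNReal.ofReal (c * (a / u) ^ p) = ENNReal.ofReal (c * a / (p - 1)) := by
  have hpow : ∀ u ∈ Ioi a, c * (a / u) ^ p = c * a ^ p * u ^ (-p) := fun u hu => by
    rw [Real.div_rpow ha.le (ha.trans hu).le, Real.rpow_neg (ha.trans hu).le]
    ring
  have hint_pow : IntegrableOn (fun u => c * a ^ p * u ^ (-p)) (Ioi a) :=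
    (integrableOn_Ioi_rpow_of_lt (by linarith) ha).const_mul _
  have hint : IntegrableOn (fun u => c * (a / u) ^ p) (Ioi a) :=
    hint_pow.congr_fun (fun u hu => (hpow u hu).symm) measurableSet_Ioi
  have hnonneg : 0 ≤ᵐ[volume.restrict (Ioi a)] fun u => c * (a / u) ^ p := by
    filter_upwards [ae_restrict_mem measurableSet_Ioi] with u hu
    exact mul_nonneg hc (Real.rpow_nonneg (div_nonneg ha.le (ha.trans hu).le) _)
  rw [← ofReal_integral_eq_lintegral_ofReal hint hnonneg,
    setIntegral_congr_fun measurableSet_Ioi hpow, integral_const_mul,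
    integral_Ioi_rpow_of_lt (by linarith) ha, Real.rpow_add ha, Real.rpow_neg ha.le,
    Real.rpow_one]
  congr 1
  have : a ^ p ≠ 0 := (Real.rpow_pos_of_pos ha p).ne'
  have : -p + 1 ≠ 0 := by linarith
  have : p - 1 ≠ 0 := by linarith
  field_simp
  ring

/-- Let `f : (0,∞) → (0,∞)` be continuous, strictly decreasing, tending to `∞` at `0⁺`, with
`t ↦ t ^ (d - ε) * f t` increasing on `(0, tε]` for some `0 < ε < d`.  Then for every `r` with
`0 < 3r < tε`, the integral `∫_{f(3r)}^∞ (f⁻¹ u)^d du` is finite and bounded by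
`C * r^d * f(2r)`, with `C` depending only on `d` and `ε`. -/
theorem tail_integral_of_inverse_bound (d ε : ℝ) (hε0 : 0 < ε) (hεd : ε < d) :
    ∃ C > (0:ℝ), ∀ (f : ℝ → ℝ) (tε : ℝ), 0 < tε →
      ContinuousOn f (Set.Ioi 0) → StrictAntiOn f (Set.Ioi 0) →
      (∀ t ∈ Set.Ioi (0:ℝ), 0 < f t) →
      Tendsto f (nhdsWithin 0 (Set.Ioi 0)) atTop →
      MonotoneOn (fun t => t ^ (d - ε) * f t) (Set.Ioc 0 tε) →
      ∀ r : ℝ, 0 < r → 3 * r < tε →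
        (∫⁻ u in Set.Ioi (f (3 * r)),
            ENNReal.ofReal ((Function.invFunOn f (Set.Ioi 0) u) ^ d)) ≤
          ENNReal.ofReal (C * r ^ d * f (2 * r)) := by
  have hdε : 0 < d - ε := sub_pos.mpr hεd
  refine ⟨3 ^ d * ((d - ε) / ε), by positivity, ?_⟩
  intro f tε _ hcont hanti hpos hlim hmono r hr h3r
  have h3r0 : 0 < 3 * r := by positivity
  have hf3r := hpos _ h3r0
  have hpoint : ∀ u ∈ Ioi (f (3 * r)), Function.invFunOn f (Ioi 0) u ^ d ≤
      (3 * r) ^ d * (f (3 * r) / u) ^ (d / (d - ε)) := fun u hu => by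
    obtain ⟨ht, hft⟩ := invFunOn_Ioi_mem_Ioo_of_lt hcont hanti hlim h3r0 hu
    have hmono_t := hmono ⟨ht.1, ht.2.le.trans h3r.le⟩ ⟨h3r0, h3r.le⟩ ht.2.le
    simp only [hft] at hmono_t
    exact Real.rpow_le_mul_div_rpow_of_rpow_mul_le ht.1.le (hf3r.trans hu) hf3r.le h3r0.le hdε
      (by linarith) hmono_t
  have hp1 : d / (d - ε) - 1 = ε / (d - ε) := by field_simp; ring
  calc _ ≤ ∫⁻ u in Ioi (f (3 * r)),
        ENNReal.ofReal ((3 * r) ^ d * (f (3 * r) / u) ^ (d / (d - ε))) :=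
        setLIntegral_mono (by fun_prop) fun u hu => ENNReal.ofReal_le_ofReal (hpoint u hu)
    _ = ENNReal.ofReal ((3 * r) ^ d * f (3 * r) / (d / (d - ε) - 1)) :=
        lintegral_Ioi_ofReal_mul_div_rpow hf3r ((one_lt_div hdε).mpr (by linarith))
          (by positivity)
    _ ≤ _ := by
      refine ENNReal.ofReal_le_ofReal ?_
      rw [hp1, Real.mul_rpow (by norm_num) hr.le, div_div_eq_mul_div]
      have hf : f (3 * r) ≤ f (2 * r) :=
        (hanti (by positivity : (0:ℝ) < 2 * r) h3r0 (by linarith)).le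
      calc 3 ^ d * r ^ d * f (3 * r) * (d - ε) / ε
          = 3 ^ d * ((d - ε) / ε) * r ^ d * f (3 * r) := by ring
        _ ≤ 3 ^ d * ((d - ε) / ε) * r ^ d * f (2 * r) := by gcongr
end

section
/- Let A ⊂ ℝ^p be a compact d-regular set and f a d-Riesz-like function. Then there exist constants C₀ > 0 and r₀ > 0 such that for every x ∈ A, y ∈ A and 0 < r < r₀, (1/H_d(A ∩ B(y,r))) · (1/f(|x−y|)) · ∫_{A ∩ B(y,r)} f(|x−z|) dH_d(z) ≤ C₀. -/
open MeasureTheory Metric Set Filter Topology ENNReal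
open scoped Classical

noncomputable section

/-- `A` is a `d`-regular set: the `d`-dimensional Hausdorff measure of small balls
intersected with `A` is comparable to `r^d`. -/
def DRegular {p : ℕ} (d : ℝ) (A : Set (EuclideanSpace ℝ (Fin p))) : Prop :=
  ∃ c > (0:ℝ), ∃ C > (0:ℝ), ∀ y ∈ A, ∀ r : ℝ, 0 < r → r < Metric.diam A →
    ENNReal.ofReal (c * r ^ d) ≤ μH[d] (A ∩ Metric.ball y r) ∧
      μH[d] (A ∩ Metric.ball y r) ≤ ENNReal.ofReal (C * r ^ d)

/-- `f` is a `d`-Riesz-like function: positive, continuous and strictly decreasing on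
`(0, ∞)`, and `t ↦ t ^ (d - ε) * f t` is increasing on `(0, tε]` for some `0 < ε < d`. -/
def RieszLike (d : ℝ) (f : ℝ → ℝ) : Prop :=
  ContinuousOn f (Set.Ioi 0) ∧ StrictAntiOn f (Set.Ioi 0) ∧
    (∀ t ∈ Set.Ioi (0:ℝ), 0 < f t) ∧
    ∃ ε ∈ Set.Ioo (0:ℝ) d, ∃ tε > (0:ℝ),
      MonotoneOn (fun t => t ^ (d - ε) * f t) (Set.Ioc 0 tε)

/-- The kernel `K(x,y) = f (|x - y|)`, with the value on the diagonal defined as the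
(lower semicontinuous) limit `f(0⁺) = sup_{t > 0} f t`. -/
def rkernel {p : ℕ} (f : ℝ → ℝ) (x y : EuclideanSpace ℝ (Fin p)) : ℝ≥0∞ :=
  if x = y then ⨆ t : {t : ℝ // 0 < t}, ENNReal.ofReal (f t.1)
  else ENNReal.ofReal (f (dist x y))

/-- The potential `U_f^μ(y) = ∫ f(|x - y|) dμ(x)`. -/
def potential {p : ℕ} (f : ℝ → ℝ) (μ : Measure (EuclideanSpace ℝ (Fin p)))
    (y : EuclideanSpace ℝ (Fin p)) : ℝ≥0∞ :=
  ∫⁻ x, rkernel f x y ∂μ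

/-- The `f`-polarization of `μ` on `A`: `P_f(μ) = inf_{y ∈ A} U_f^μ(y)`. -/
def polar {p : ℕ} (f : ℝ → ℝ) (A : Set (EuclideanSpace ℝ (Fin p)))
    (μ : Measure (EuclideanSpace ℝ (Fin p))) : ℝ≥0∞ :=
  ⨅ y ∈ A, potential f μ y

/-! If `|x - y| ≥ 2r`, every `z ∈ B(y,r)` has `|x - z| ≥ |x - y| / 2`, and `f(t/2) ≤ C₁ f(t)` on
`(0, diam A]`: near `0` by the monotonicity of `t^(d-ε) f(t)`, away from `0` by positivity and
monotonicity of `f`. If `|x - y| < 2r`, then `B(y,r) ⊆ B(x,3r)` and `f(|x - y|) ≥ f(3r)`;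
splitting `B(x,3r)` into the dyadic annuli `3r/2^(j+1) ≤ |x - z| < 3r/2^j`, the upper regularity
bound and the monotonicity of `t^(d-ε) f(t)` bound the integral by a geometric series
`≲ r^d f(3r) ∑ 2^(-jε)`, while the lower regularity bound gives `H_d(A ∩ B(y,r)) ≳ r^d`. -/

-- No side conditions are needed because `a⁻¹ * a ≤ 1` holds in `ℝ≥0∞` even for `a = 0, ∞`.
lemma ENNReal.inv_mul_inv_mul_le {a b I c : ℝ≥0∞} (h : I ≤ c * b * a) : a⁻¹ * b⁻¹ * I ≤ c :=
  calc a⁻¹ * b⁻¹ * I ≤ a⁻¹ * b⁻¹ * (c * b * a) := by gcongr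
    _ = c * (b⁻¹ * b) * (a⁻¹ * a) := by ring
    _ ≤ c * 1 * 1 := by gcongr <;> exact ENNReal.inv_mul_le_one _
    _ = c := by simp

lemma exists_div_two_pow_succ_le_lt {s R : ℝ} (hs : 0 < s) (hsR : s < R) :
    ∃ j : ℕ, R / 2 ^ (j + 1) ≤ s ∧ s < R / 2 ^ j := by
  have hex : ∃ j : ℕ, R / 2 ^ (j + 1) ≤ s := by
    obtain ⟨n, hn⟩ :=
      exists_pow_lt_of_lt_one (div_pos hs (hs.trans hsR)) (by norm_num : (2:ℝ)⁻¹ < 1)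
    refine ⟨n, ?_⟩
    rw [inv_pow, lt_div_iff₀ (hs.trans hsR), inv_mul_eq_div] at hn
    exact (div_le_div_of_nonneg_left (hs.trans hsR).le (by positivity)
      (pow_le_pow_right₀ one_le_two n.le_succ)).trans hn.le
  refine ⟨Nat.find hex, Nat.find_spec hex, ?_⟩
  cases h : Nat.find hex with
  | zero => simpa using hsR
  | succ k => exact lt_of_not_ge (Nat.find_min hex (h ▸ k.lt_succ_self))

section RieszLike

variable {d ε : ℝ} {f : ℝ → ℝ}

lemma le_div_rpow_mul_of_monotoneOn {tε : ℝ}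
    (hmono : MonotoneOn (fun t => t ^ (d - ε) * f t) (Ioc 0 tε))
    {s t : ℝ} (hs : 0 < s) (hst : s ≤ t) (ht : t ≤ tε) :
    f s ≤ (t / s) ^ (d - ε) * f t := by
  have h := hmono ⟨hs, hst.trans ht⟩ ⟨hs.trans_le hst, ht⟩ hst
  rw [Real.div_rpow (hs.trans_le hst).le hs.le, div_mul_eq_mul_div,
    le_div_iff₀ (Real.rpow_pos_of_pos hs _), mul_comm (f s)]
  exact h

lemma RieszLike.exists_half_le_mul (hf : RieszLike d f) {D : ℝ} (hD : 0 < D) :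
    ∃ C₁ > 0, ∀ t ∈ Ioc 0 D, f (t / 2) ≤ C₁ * f t := by
  obtain ⟨-, hfa, hfp, ε, -, tε, htε, hmono⟩ := hf
  refine ⟨max (2 ^ (d - ε)) (f (tε / 2) / f D), by positivity, fun t ⟨ht, htD⟩ => ?_⟩
  rcases le_or_gt t tε with htε' | htε'
  · calc f (t / 2) ≤ (t / (t / 2)) ^ (d - ε) * f t :=
          le_div_rpow_mul_of_monotoneOn hmono (half_pos ht) (half_le_self ht.le) htε'
      _ = 2 ^ (d - ε) * f t := by rw [div_div_cancel₀ ht.ne']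
      _ ≤ _ := by gcongr; exacts [(hfp t ht).le, le_max_left _ _]
  · calc f (t / 2) ≤ f (tε / 2) := hfa.antitoneOn (half_pos htε) (half_pos ht) (by linarith)
      _ = f (tε / 2) / f D * f D := (div_mul_cancel₀ _ (hfp D hD).ne').symm
      _ ≤ _ := by
        gcongr
        · exact (hfp D hD).le
        · exact le_max_right _ _
        · exact hfa.antitoneOn ht hD htD

end RieszLike

lemma two_pow_succ_rpow_mul_div_two_pow_rpow {d ε R : ℝ} (hR : 0 ≤ R) (j : ℕ) :
    ((2:ℝ) ^ (j + 1)) ^ (d - ε) * (R / 2 ^ j) ^ d = 2 ^ (d - ε) * R ^ d * ((2:ℝ) ^ (-ε)) ^ j := by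
  have h2 : (0:ℝ) < 2 := two_pos
  rw [Real.div_rpow hR (by positivity), ← Real.rpow_natCast, ← Real.rpow_natCast,
    ← Real.rpow_natCast (2 ^ (-ε)), ← Real.rpow_mul h2.le, ← Real.rpow_mul h2.le,
    ← Real.rpow_mul h2.le, mul_div_assoc', div_eq_iff (Real.rpow_pos_of_pos h2 _).ne']
  have hexp : (2:ℝ) ^ ((↑(j + 1):ℝ) * (d - ε)) = 2 ^ (d - ε) * 2 ^ (-ε * j) * 2 ^ ((j:ℝ) * d) := by
    rw [← Real.rpow_add h2, ← Real.rpow_add h2]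
    push_cast
    ring_nf
  rw [hexp]
  ring

lemma tsum_ofReal_mul_dyadic_le {d ε R C : ℝ} {f : ℝ → ℝ}
    (hmono : MonotoneOn (fun t => t ^ (d - ε) * f t) (Ioc 0 R)) (hε : 0 < ε) (hR : 0 < R)
    (hfR : 0 ≤ f R) (hC : 0 ≤ C) :
    ∑' j : ℕ, ENNReal.ofReal (f (R / 2 ^ (j + 1))) * ENNReal.ofReal (C * (R / 2 ^ j) ^ d) ≤
      ENNReal.ofReal (2 ^ (d - ε) / (1 - 2 ^ (-ε)) * C * R ^ d * f R) := by
  set q : ℝ := 2 ^ (-ε)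
  have hq0 : 0 ≤ q := by positivity
  have hq1 : q < 1 := Real.rpow_lt_one_of_one_lt_of_neg one_lt_two (neg_neg_of_pos hε)
  set K : ℝ := 2 ^ (d - ε) * C * R ^ d * f R
  have hterm : ∀ j : ℕ, f (R / 2 ^ (j + 1)) * (C * (R / 2 ^ j) ^ d) ≤ K * q ^ j := fun j => by
    have hf : f (R / 2 ^ (j + 1)) ≤ ((2:ℝ) ^ (j + 1)) ^ (d - ε) * f R := by
      simpa [div_div_cancel₀ hR.ne'] using le_div_rpow_mul_of_monotoneOn hmono (by positivity)
        (div_le_self hR.le (one_le_pow₀ one_le_two)) le_rfl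
    calc f (R / 2 ^ (j + 1)) * (C * (R / 2 ^ j) ^ d)
        ≤ ((2:ℝ) ^ (j + 1)) ^ (d - ε) * f R * (C * (R / 2 ^ j) ^ d) := by gcongr
      _ = ((2:ℝ) ^ (j + 1)) ^ (d - ε) * (R / 2 ^ j) ^ d * (C * f R) := by ring
      _ = K * q ^ j := by rw [two_pow_succ_rpow_mul_div_two_pow_rpow hR.le j]; ring
  calc ∑' j : ℕ, ENNReal.ofReal (f (R / 2 ^ (j + 1))) * ENNReal.ofReal (C * (R / 2 ^ j) ^ d)
      ≤ ∑' j : ℕ, ENNReal.ofReal (K * q ^ j) := ENNReal.tsum_le_tsum fun j => by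
        rw [← ENNReal.ofReal_mul' (by positivity)]
        exact ENNReal.ofReal_le_ofReal (hterm j)
    _ = ENNReal.ofReal (K * (1 - q)⁻¹) := by
      rw [← ENNReal.ofReal_tsum_of_nonneg (fun j => by positivity)
        ((summable_geometric_of_lt_one hq0 hq1).mul_left K), tsum_mul_left,
        tsum_geometric_of_lt_one hq0 hq1]
    _ = _ := by congr 1; ring

section Kernel

variable {p : ℕ} {f : ℝ → ℝ}

lemma rkernel_le_ofReal (hfa : AntitoneOn f (Ioi 0)) {x z : EuclideanSpace ℝ (Fin p)} {t : ℝ}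
    (ht : 0 < t) (htxz : t ≤ dist x z) : rkernel f x z ≤ ENNReal.ofReal (f t) := by
  rw [rkernel, if_neg (dist_pos.1 (ht.trans_le htxz))]
  exact ENNReal.ofReal_le_ofReal (hfa ht (ht.trans_le htxz) htxz)

lemma ofReal_le_rkernel (hfa : AntitoneOn f (Ioi 0)) {x y : EuclideanSpace ℝ (Fin p)} {t : ℝ}
    (ht : 0 < t) (hxyt : dist x y ≤ t) : ENNReal.ofReal (f t) ≤ rkernel f x y := by
  rw [rkernel]
  split_ifs with hxy
  · exact le_iSup (fun s : {s : ℝ // 0 < s} => ENNReal.ofReal (f s.1)) ⟨t, ht⟩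
  · exact ENNReal.ofReal_le_ofReal (hfa (dist_pos.2 hxy) ht hxyt)

variable {μ : Measure (EuclideanSpace ℝ (Fin p))}

lemma setLIntegral_rkernel_le_of_two_mul_le_dist (hfa : AntitoneOn f (Ioi 0))
    {B : Set (EuclideanSpace ℝ (Fin p))} (hB : MeasurableSet B) {x y : EuclideanSpace ℝ (Fin p)}
    {r : ℝ} (hr : 0 < r) (hBy : B ⊆ ball y r) (hxy : 2 * r ≤ dist x y) {C₁ : ℝ} (hC₁ : 0 ≤ C₁)
    (hdouble : f (dist x y / 2) ≤ C₁ * f (dist x y)) :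
    ∫⁻ z in B, rkernel f x z ∂μ ≤ ENNReal.ofReal C₁ * rkernel f x y * μ B := by
  have hkernel : ∀ z ∈ B, rkernel f x z ≤ ENNReal.ofReal C₁ * rkernel f x y := fun z hz => by
    have hzy : dist z y < r := hBy hz
    calc rkernel f x z ≤ ENNReal.ofReal (f (dist x y / 2)) :=
          rkernel_le_ofReal hfa (by linarith) (by linarith [dist_triangle x z y])
      _ ≤ ENNReal.ofReal C₁ * ENNReal.ofReal (f (dist x y)) := by
          rw [← ENNReal.ofReal_mul hC₁]; exact ENNReal.ofReal_le_ofReal hdouble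
      _ ≤ _ := by gcongr; exact ofReal_le_rkernel hfa (by linarith) le_rfl
  exact (setLIntegral_mono' hB hkernel).trans_eq (setLIntegral_const _ _)

lemma setLIntegral_rkernel_ball_le_tsum (hfa : AntitoneOn f (Ioi 0))
    {s : Set (EuclideanSpace ℝ (Fin p))} (hs : MeasurableSet s) {x : EuclideanSpace ℝ (Fin p)}
    (hx : μ {x} = 0) {R : ℝ} (hR : 0 < R) :
    ∫⁻ z in s ∩ ball x R, rkernel f x z ∂μ ≤
      ∑' j : ℕ, ENNReal.ofReal (f (R / 2 ^ (j + 1))) * μ (s ∩ ball x (R / 2 ^ j)) := by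
  set S : ℕ → Set (EuclideanSpace ℝ (Fin p)) :=
    fun j => s ∩ (ball x (R / 2 ^ j) \ ball x (R / 2 ^ (j + 1)))
  have hcover : (s ∩ ball x R) \ {x} ⊆ ⋃ j, S j := by
    rintro z ⟨⟨hzs, hzR⟩, hzx⟩
    obtain ⟨j, hjz, hzj⟩ := exists_div_two_pow_succ_le_lt (dist_pos.2 hzx) hzR
    exact mem_iUnion.2 ⟨j, hzs, hzj, hjz.not_gt⟩
  have hS : ∀ j, ∫⁻ z in S j, rkernel f x z ∂μ ≤
      ENNReal.ofReal (f (R / 2 ^ (j + 1))) * μ (s ∩ ball x (R / 2 ^ j)) := fun j =>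
    calc ∫⁻ z in S j, rkernel f x z ∂μ ≤ ENNReal.ofReal (f (R / 2 ^ (j + 1))) * μ (S j) := by
          refine (setLIntegral_mono' (hs.inter (measurableSet_ball.diff measurableSet_ball))
            fun z hz => rkernel_le_ofReal hfa (by positivity) ?_).trans_eq (setLIntegral_const _ _)
          rw [dist_comm]
          exact not_lt.1 hz.2.2
      _ ≤ _ := by gcongr; exact inter_subset_inter_right _ sdiff_subset
  calc ∫⁻ z in s ∩ ball x R, rkernel f x z ∂μ = ∫⁻ z in (s ∩ ball x R) \ {x}, rkernel f x z ∂μ :=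
        setLIntegral_congr (sdiff_ae_eq_self.2 (measure_mono_null inter_subset_right hx)).symm
    _ ≤ ∫⁻ z in ⋃ j, S j, rkernel f x z ∂μ := lintegral_mono_set hcover
    _ ≤ ∑' j, ∫⁻ z in S j, rkernel f x z ∂μ := lintegral_iUnion_le _ _
    _ ≤ _ := ENNReal.tsum_le_tsum hS

end Kernel

section Near

variable {p : ℕ} {d ε : ℝ} {f : ℝ → ℝ} {μ : Measure (EuclideanSpace ℝ (Fin p))}

lemma setLIntegral_rkernel_ball_le (hfa : AntitoneOn f (Ioi 0)) {R : ℝ}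
    (hmono : MonotoneOn (fun t => t ^ (d - ε) * f t) (Ioc 0 R)) (hε : 0 < ε) (hR : 0 < R)
    (hfR : 0 ≤ f R) {s : Set (EuclideanSpace ℝ (Fin p))} (hs : MeasurableSet s)
    {x : EuclideanSpace ℝ (Fin p)} (hx : μ {x} = 0) {C : ℝ} (hC : 0 ≤ C)
    (hball : ∀ ρ ∈ Ioc 0 R, μ (s ∩ ball x ρ) ≤ ENNReal.ofReal (C * ρ ^ d)) :
    ∫⁻ z in s ∩ ball x R, rkernel f x z ∂μ ≤
      ENNReal.ofReal (2 ^ (d - ε) / (1 - 2 ^ (-ε)) * C * R ^ d * f R) := by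
  refine (setLIntegral_rkernel_ball_le_tsum hfa hs hx hR).trans <|
    (ENNReal.tsum_le_tsum fun j => ?_).trans (tsum_ofReal_mul_dyadic_le hmono hε hR hfR hC)
  gcongr
  exact hball _ ⟨by positivity, div_le_self hR.le (one_le_pow₀ one_le_two)⟩

lemma setLIntegral_rkernel_le_of_dist_lt_two_mul (hfa : AntitoneOn f (Ioi 0)) {r : ℝ}
    (hmono : MonotoneOn (fun t => t ^ (d - ε) * f t) (Ioc 0 (3 * r))) (hε : 0 < ε) (hr : 0 < r)
    (hfr : 0 ≤ f (3 * r)) {s : Set (EuclideanSpace ℝ (Fin p))} (hs : MeasurableSet s)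
    {x y : EuclideanSpace ℝ (Fin p)} (hx : μ {x} = 0) (hxy : dist x y < 2 * r) {c C : ℝ}
    (hc : 0 < c) (hC : 0 ≤ C)
    (hball : ∀ ρ ∈ Ioc 0 (3 * r), μ (s ∩ ball x ρ) ≤ ENNReal.ofReal (C * ρ ^ d))
    (hlow : ENNReal.ofReal (c * r ^ d) ≤ μ (s ∩ ball y r)) :
    ∫⁻ z in s ∩ ball y r, rkernel f x z ∂μ ≤
      ENNReal.ofReal (2 ^ (d - ε) / (1 - 2 ^ (-ε)) * C * 3 ^ d / c) * rkernel f x y *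
        μ (s ∩ ball y r) := by
  have hq : 0 < 1 - (2:ℝ) ^ (-ε) :=
    sub_pos.2 (Real.rpow_lt_one_of_one_lt_of_neg one_lt_two (neg_neg_of_pos hε))
  have hsub : s ∩ ball y r ⊆ s ∩ ball x (3 * r) := fun z ⟨hzs, hzy⟩ =>
    ⟨hzs, by rw [mem_ball] at hzy ⊢; linarith [dist_triangle z y x, dist_comm x y]⟩
  calc ∫⁻ z in s ∩ ball y r, rkernel f x z ∂μ
      ≤ ∫⁻ z in s ∩ ball x (3 * r), rkernel f x z ∂μ := lintegral_mono_set hsub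
    _ ≤ ENNReal.ofReal (2 ^ (d - ε) / (1 - 2 ^ (-ε)) * C * (3 * r) ^ d * f (3 * r)) :=
      setLIntegral_rkernel_ball_le hfa hmono hε (by positivity) hfr hs hx hC hball
    _ = ENNReal.ofReal (2 ^ (d - ε) / (1 - 2 ^ (-ε)) * C * 3 ^ d / c) *
          ENNReal.ofReal (f (3 * r)) * ENNReal.ofReal (c * r ^ d) := by
      rw [← ENNReal.ofReal_mul (by positivity), ← ENNReal.ofReal_mul (by positivity),
        Real.mul_rpow (by norm_num) hr.le]
      congr 1
      field_simp
    _ ≤ _ := by gcongr; exact ofReal_le_rkernel hfa (by positivity) (by linarith)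

end Near

theorem averaged_kernel_bound_general (p : ℕ) (d : ℝ)
    (A : Set (EuclideanSpace ℝ (Fin p))) (hA : IsCompact A) (hreg : DRegular d A)
    (f : ℝ → ℝ) (hf : RieszLike d f) :
    ∃ C₀ > (0:ℝ), ∃ r₀ > (0:ℝ), ∀ x ∈ A, ∀ y ∈ A, ∀ r : ℝ, 0 < r → r < r₀ →
      (μH[d] (A ∩ Metric.ball y r))⁻¹ * (rkernel f x y)⁻¹ *
          ∫⁻ z in A ∩ Metric.ball y r, rkernel f x z ∂μH[d] ≤
        ENNReal.ofReal C₀ := by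
  obtain ⟨c, hc, C, hC, hreg⟩ := hreg
  have hfa : AntitoneOn f (Ioi 0) := hf.2.1.antitoneOn
  obtain ⟨ε, ⟨hε, hεd⟩, tε, htε, hmono⟩ := hf.2.2.2
  have : NullSingletonClass (μH[d] : Measure (EuclideanSpace ℝ (Fin p))) :=
    Measure.nullSingletonClass_hausdorff _ (hε.trans hεd)
  rcases le_or_gt (diam A) 0 with hD | hD
  · refine ⟨1, one_pos, 1, one_pos, fun x _ y _ r _ _ => ?_⟩
    have hnull : μH[d] (A ∩ ball y r) = 0 := Set.Subsingleton.measure_zero (fun a ha b hb =>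
      dist_le_zero.1 ((dist_le_diam_of_mem hA.isBounded ha.1 hb.1).trans hD)) _
    simp [Measure.restrict_eq_zero.2 hnull]
  obtain ⟨C₁, hC₁, hdouble⟩ := hf.exists_half_le_mul hD
  refine ⟨max C₁ (2 ^ (d - ε) / (1 - 2 ^ (-ε)) * C * 3 ^ d / c), lt_max_of_lt_left hC₁,
    min (tε / 3) (diam A / 3), by positivity, fun x hx y hy r hr hrr => ?_⟩
  have hrtε : 3 * r ≤ tε := by linarith [min_le_left (tε / 3) (diam A / 3)]
  have hrD : 3 * r < diam A := by linarith [min_le_right (tε / 3) (diam A / 3)]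
  have hAm : MeasurableSet A := hA.isClosed.measurableSet
  refine ENNReal.inv_mul_inv_mul_le ?_
  rcases le_or_gt (2 * r) (dist x y) with hfar | hnear
  · refine (setLIntegral_rkernel_le_of_two_mul_le_dist hfa (hAm.inter measurableSet_ball) hr
      inter_subset_right hfar hC₁.le
      (hdouble _ ⟨by linarith, dist_le_diam_of_mem hA.isBounded hx hy⟩)).trans ?_
    gcongr
    exact le_max_left _ _
  · refine (setLIntegral_rkernel_le_of_dist_lt_two_mul hfa (hmono.mono (Ioc_subset_Ioc_right hrtε))
      hε hr (hf.2.2.1 _ (mul_pos three_pos hr)).le hAm (measure_singleton x) hnear hc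
      hC.le (fun ρ hρ => (hreg x hx ρ hρ.1 (hρ.2.trans_lt hrD)).2)
      (hreg y hy r hr (by linarith)).1).trans ?_
    gcongr
    exact le_max_right _ _

/-- Technical lemma: for a compact `d`-regular set `A` and a `d`-Riesz-like `f`, there are
`C₀, r₀ > 0` such that for all `x, y ∈ A` and `0 < r < r₀`,
`(1 / H_d(A ∩ B(y,r))) * (1 / f(|x-y|)) * ∫_{A ∩ B(y,r)} f(|x-z|) dH_d(z) ≤ C₀`. -/
theorem averaged_kernel_bound (p : ℕ) (d : ℝ) (hd : 0 < d) (hdp : d ≤ p)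
    (A : Set (EuclideanSpace ℝ (Fin p))) (hA : IsCompact A) (hreg : DRegular d A)
    (f : ℝ → ℝ) (hf : RieszLike d f) :
    ∃ C₀ > (0:ℝ), ∃ r₀ > (0:ℝ), ∀ x ∈ A, ∀ y ∈ A, ∀ r : ℝ, 0 < r → r < r₀ →
      (μH[d] (A ∩ Metric.ball y r))⁻¹ * (rkernel f x y)⁻¹ *
          ∫⁻ z in A ∩ Metric.ball y r, rkernel f x z ∂μH[d] ≤
        ENNReal.ofReal C₀ :=
  averaged_kernel_bound_general p d A hA hreg f hf
end
end

section
/- Let A ⊂ ℝ^p be a compact d-regular set and f a d-Riesz-like function. Then the potential of the Hausdorff measure restricted to A, y ↦ ∫_A f(|x−y|) dH_d(x), is bounded above on A by a constant independent of y. -/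
open MeasureTheory Metric Set Filter Topology ENNReal
open scoped Classical

noncomputable section

/-!
Fix `y ∈ A` and a scale `δ`, and split `A` into the far part `δ ≤ |x - y|`, the point `y`
(which is `μH[d]`-null as `d > 0`) and the dyadic shells `δ / 2^(j+1) ≤ |x - y| < δ / 2^j`.
The kernel is at most `f δ` on the far part and at most `f (δ / 2^(j+1))` on the `j`-th shell,
whose measure is `O((δ / 2^j)^d)` by regularity. Since `t^(d-ε) f t` increases,
`f t · t^d ≤ f s · s^d · (t / s)^ε` for `t ≤ s`, so the `j`-th shell contributes `O(2^(-ε j))`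
and the shells add up to a convergent geometric series, with constants independent of `y`.
-/

theorem exists_dyadic_shell {t δ : ℝ} (ht : 0 < t) (htδ : t < δ) :
    ∃ j : ℕ, δ / 2 ^ (j + 1) ≤ t ∧ t < δ / 2 ^ j := by
  have h2 : (1 : ℝ) < 2 := by norm_num
  obtain ⟨m, hm_lt, hm_le⟩ := exists_mem_Ioc_zpow (div_pos (ht.trans htδ) ht) h2
  have hm : 0 ≤ m := by
    have h : (2 : ℝ) ^ (0 : ℤ) < 2 ^ (m + 1) := by
      rw [zpow_zero]
      exact (one_lt_div ht |>.2 htδ).trans_le hm_le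
    have := (zpow_lt_zpow_iff_right₀ h2).1 h
    omega
  lift m to ℕ using hm
  refine ⟨m, ?_, ?_⟩
  · rw [div_le_iff₀ (by positivity), mul_comm, ← div_le_iff₀ ht]
    exact_mod_cast hm_le
  · rw [lt_div_iff₀ (by positivity), mul_comm, ← lt_div_iff₀ ht]
    exact_mod_cast hm_lt

theorem lintegral_le_dyadic_sum {X : Type*} [MetricSpace X] [MeasurableSpace X]
    [OpensMeasurableSpace X] {μ : Measure X} {y : X} (hy : μ {y} = 0) {g : ℝ → ℝ≥0∞}
    (hg : AntitoneOn g (Ioi 0)) {k : X → ℝ≥0∞} (hk : ∀ x, x ≠ y → k x ≤ g (dist x y))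
    {δ : ℝ} (hδ : 0 < δ) :
    ∫⁻ x, k x ∂μ ≤ g δ * μ univ + ∑' j : ℕ, g (δ / 2 ^ (j + 1)) * μ (ball y (δ / 2 ^ j)) := by
  have hpoint : ∀ x, x ≠ y →
      k x ≤ g δ + ∑' j : ℕ, (ball y (δ / 2 ^ j)).indicator (fun _ => g (δ / 2 ^ (j + 1))) x := by
    intro x hxy
    have hx : 0 < dist x y := dist_pos.2 hxy
    refine (hk x hxy).trans ?_
    rcases le_or_gt δ (dist x y) with hfar | hnear
    · exact (hg hδ hx hfar).trans le_self_add
    obtain ⟨j, hj_le, hj_lt⟩ := exists_dyadic_shell hx hnear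
    calc g (dist x y) ≤ g (δ / 2 ^ (j + 1)) := hg (mem_Ioi.2 (by positivity)) hx hj_le
      _ = (ball y (δ / 2 ^ j)).indicator (fun _ => g (δ / 2 ^ (j + 1))) x :=
        (indicator_of_mem (mem_ball.2 hj_lt) fun _ => g (δ / 2 ^ (j + 1))).symm
      _ ≤ _ := ENNReal.le_tsum j
      _ ≤ _ := le_add_self
  calc ∫⁻ x, k x ∂μ
      ≤ ∫⁻ x, g δ + ∑' j : ℕ, (ball y (δ / 2 ^ j)).indicator (fun _ => g (δ / 2 ^ (j + 1))) x ∂μ :=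
        lintegral_mono_ae ((measure_eq_zero_iff_ae_notMem.1 hy).mono hpoint)
    _ = g δ * μ univ + ∑' j : ℕ, g (δ / 2 ^ (j + 1)) * μ (ball y (δ / 2 ^ j)) := by
      rw [lintegral_add_left measurable_const, lintegral_const,
        lintegral_tsum fun j => (measurable_const.indicator measurableSet_ball).aemeasurable]
      simp_rw [lintegral_indicator_const measurableSet_ball]

section RieszLike

variable {f : ℝ → ℝ} {d ε T : ℝ}

theorem mul_rpow_le_of_monotoneOn (hmono : MonotoneOn (fun t => t ^ (d - ε) * f t) (Ioc 0 T))
    {s t : ℝ} (ht : 0 < t) (hts : t ≤ s) (hsT : s ≤ T) :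
    f t * t ^ d ≤ f s * s ^ d * (t / s) ^ ε := by
  have hs : 0 < s := ht.trans_le hts
  have hsplit : ∀ u : ℝ, 0 < u → u ^ d = u ^ (d - ε) * u ^ ε := fun u hu => by
    rw [← Real.rpow_add hu, sub_add_cancel]
  calc f t * t ^ d = (t ^ (d - ε) * f t) * t ^ ε := by rw [hsplit t ht]; ring
    _ ≤ (s ^ (d - ε) * f s) * t ^ ε :=
      mul_le_mul_of_nonneg_right (hmono ⟨ht, hts.trans hsT⟩ ⟨hs, hsT⟩ hts) (by positivity)
    _ = f s * s ^ d * (t / s) ^ ε := by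
      rw [hsplit s hs, Real.div_rpow ht.le hs.le]
      field_simp

theorem mul_rpow_div_two_pow_le (hmono : MonotoneOn (fun t => t ^ (d - ε) * f t) (Ioc 0 T))
    {s : ℝ} (hs : 0 < s) (hsT : s ≤ T) (n : ℕ) :
    f (s / 2 ^ n) * (s / 2 ^ n) ^ d ≤ f s * s ^ d * ((2⁻¹ : ℝ) ^ ε) ^ n := by
  have h := mul_rpow_le_of_monotoneOn hmono (t := s / 2 ^ n) (by positivity)
    (div_le_self hs.le (one_le_pow₀ (by norm_num))) hsT
  rwa [div_div_cancel_left' hs.ne', ← inv_pow, ← Real.rpow_pow_comm (by norm_num)] at h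

theorem mul_rpow_div_two_pow_succ_le
    (hmono : MonotoneOn (fun t => t ^ (d - ε) * f t) (Ioc 0 T)) {δ : ℝ} (hδ : 0 < δ)
    (hδT : δ ≤ T) (j : ℕ) :
    f (δ / 2 ^ (j + 1)) * (δ / 2 ^ j) ^ d ≤ f (δ / 2) * δ ^ d * ((2⁻¹ : ℝ) ^ ε) ^ j := by
  have hdouble : ∀ u : ℝ, 0 ≤ u → (2 * u) ^ d = 2 ^ d * u ^ d := fun u hu =>
    Real.mul_rpow (by norm_num) hu
  calc f (δ / 2 ^ (j + 1)) * (δ / 2 ^ j) ^ d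
      = 2 ^ d * (f (δ / 2 / 2 ^ j) * (δ / 2 / 2 ^ j) ^ d) := by
        rw [show δ / 2 ^ j = 2 * (δ / 2 / 2 ^ j) by ring, hdouble _ (by positivity),
          show δ / 2 ^ (j + 1) = δ / 2 / 2 ^ j by ring]
        ring
    _ ≤ 2 ^ d * (f (δ / 2) * (δ / 2) ^ d * ((2⁻¹ : ℝ) ^ ε) ^ j) :=
        mul_le_mul_of_nonneg_left (mul_rpow_div_two_pow_le hmono (half_pos hδ) (by linarith) j)
          (by positivity)
    _ = f (δ / 2) * δ ^ d * ((2⁻¹ : ℝ) ^ ε) ^ j := by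
        rw [show δ = 2 * (δ / 2) by ring, hdouble _ (by positivity)]
        ring_nf

end RieszLike

theorem lintegral_le_of_measure_ball_le {X : Type*} [MetricSpace X] [MeasurableSpace X]
    [OpensMeasurableSpace X] {μ : Measure X} {y : X} (hy : μ {y} = 0) {f : ℝ → ℝ}
    {d ε C δ : ℝ} (hanti : AntitoneOn f (Ioi 0))
    (hmono : MonotoneOn (fun t => t ^ (d - ε) * f t) (Ioc 0 δ)) (hC : 0 ≤ C) (hδ : 0 < δ)
    (hball : ∀ r ∈ Ioc 0 δ, μ (ball y r) ≤ ENNReal.ofReal (C * r ^ d))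
    {k : X → ℝ≥0∞} (hk : ∀ x, x ≠ y → k x ≤ ENNReal.ofReal (f (dist x y))) :
    ∫⁻ x, k x ∂μ ≤ ENNReal.ofReal (f δ) * μ univ +
      ENNReal.ofReal (C * (f (δ / 2) * δ ^ d)) * (1 - ENNReal.ofReal ((2⁻¹ : ℝ) ^ ε))⁻¹ := by
  have hq : (0 : ℝ) ≤ 2⁻¹ ^ ε := by positivity
  calc ∫⁻ x, k x ∂μ
      ≤ ENNReal.ofReal (f δ) * μ univ +
          ∑' j : ℕ, ENNReal.ofReal (f (δ / 2 ^ (j + 1))) * μ (ball y (δ / 2 ^ j)) :=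
        lintegral_le_dyadic_sum hy (fun a ha b hb hab => ENNReal.ofReal_le_ofReal (hanti ha hb hab))
          hk hδ
    _ ≤ ENNReal.ofReal (f δ) * μ univ +
          ∑' j : ℕ, ENNReal.ofReal (C * (f (δ / 2) * δ ^ d)) * ENNReal.ofReal (2⁻¹ ^ ε) ^ j := by
        refine add_le_add_right (ENNReal.tsum_le_tsum fun j => ?_) _
        have hr : δ / 2 ^ j ∈ Ioc 0 δ :=
          ⟨by positivity, div_le_self hδ.le (one_le_pow₀ (by norm_num))⟩
        calc ENNReal.ofReal (f (δ / 2 ^ (j + 1))) * μ (ball y (δ / 2 ^ j))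
            ≤ ENNReal.ofReal (f (δ / 2 ^ (j + 1))) * ENNReal.ofReal (C * (δ / 2 ^ j) ^ d) := by
              gcongr
              exact hball _ hr
          _ = ENNReal.ofReal (f (δ / 2 ^ (j + 1)) * (C * (δ / 2 ^ j) ^ d)) :=
              (ENNReal.ofReal_mul' (by positivity)).symm
          _ ≤ ENNReal.ofReal (C * (f (δ / 2) * δ ^ d) * (2⁻¹ ^ ε) ^ j) := by
              refine ENNReal.ofReal_le_ofReal ?_
              rw [mul_left_comm, mul_assoc C]
              exact mul_le_mul_of_nonneg_left (mul_rpow_div_two_pow_succ_le hmono hδ le_rfl j) hC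
          _ = _ := by rw [ENNReal.ofReal_mul' (by positivity), ENNReal.ofReal_pow hq]
    _ = _ := by rw [ENNReal.tsum_mul_left, ENNReal.tsum_geometric]

theorem DRegular.measure_lt_top {p : ℕ} {d : ℝ} {A : Set (EuclideanSpace ℝ (Fin p))}
    (hreg : DRegular d A) (hA : IsCompact A) (hdiam : 0 < diam A) : μH[d] A < ∞ := by
  obtain ⟨_, _, C, _, hball⟩ := hreg
  refine hA.measure_lt_top_of_nhdsWithin fun x hx => ⟨A ∩ ball x (diam A / 2),
    inter_mem_nhdsWithin _ (ball_mem_nhds x (half_pos hdiam)), ?_⟩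
  exact (hball x hx _ (half_pos hdiam) (half_lt_self hdiam)).2.trans_lt ENNReal.ofReal_lt_top

theorem hausdorff_potential_bounded_general (p : ℕ) (d : ℝ) (hd : 0 < d)
    (A : Set (EuclideanSpace ℝ (Fin p))) (hA : IsCompact A) (hreg : DRegular d A)
    (f : ℝ → ℝ) (hf : RieszLike d f) :
    ∃ C : ℝ, ∀ y ∈ A, (∫⁻ x in A, rkernel f x y ∂μH[d]) ≤ ENNReal.ofReal C := by
  have : NullSingletonClass (μH[d] : Measure (EuclideanSpace ℝ (Fin p))) :=
    Measure.nullSingletonClass_hausdorff _ hd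
  rcases A.subsingleton_or_nontrivial with hsub | hnt
  · refine ⟨0, fun y _ => ?_⟩
    rw [setLIntegral_measure_zero _ _ (hsub.measure_zero _)]
    exact zero_le
  have hdiam : 0 < diam A := diam_pos hnt hA.isBounded
  have hfin : μH[d] A ≠ ∞ := (hreg.measure_lt_top hA hdiam).ne
  obtain ⟨_, _, C, hC, hball⟩ := hreg
  obtain ⟨-, hanti, -, ε, ⟨hε, -⟩, tε, htε, hmono⟩ := hf
  set δ := min tε (diam A / 2)
  have hδ : 0 < δ := lt_min htε (half_pos hdiam)
  have hδA : δ < diam A := (min_le_right _ _).trans_lt (half_lt_self hdiam)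
  have hq : ENNReal.ofReal ((2⁻¹ : ℝ) ^ ε) < 1 :=
    ENNReal.ofReal_lt_one.2 (Real.rpow_lt_one (by norm_num) (by norm_num) hε)
  set B := ENNReal.ofReal (f δ) * μH[d] A +
    ENNReal.ofReal (C * (f (δ / 2) * δ ^ d)) * (1 - ENNReal.ofReal ((2⁻¹ : ℝ) ^ ε))⁻¹
  have hB : B ≠ ∞ := by
    have hgap : 1 - ENNReal.ofReal ((2⁻¹ : ℝ) ^ ε) ≠ 0 := (tsub_pos_of_lt hq).ne'
    finiteness
  refine ⟨B.toReal, fun y hy => ?_⟩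
  rw [ENNReal.ofReal_toReal hB]
  have h := lintegral_le_of_measure_ball_le (μ := μH[d].restrict A) (measure_singleton y)
    hanti.antitoneOn (hmono.mono (Ioc_subset_Ioc_right (min_le_left _ _))) hC.le hδ
    (fun r hr => by
      rw [Measure.restrict_apply measurableSet_ball, inter_comm]
      exact (hball y hy r hr.1 (hr.2.trans_lt hδA)).2)
    (k := fun x => rkernel f x y) fun x hx => (if_neg hx).le
  rwa [Measure.restrict_apply_univ] at h

/-- The potential of the Hausdorff measure restricted to a compact `d`-regular set `A`,
`y ↦ ∫_A f(|x-y|) dH_d(x)`, is bounded above on `A` by a constant independent of `y`. -/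
theorem hausdorff_potential_bounded (p : ℕ) (d : ℝ) (hd : 0 < d) (hdp : d ≤ p)
    (A : Set (EuclideanSpace ℝ (Fin p))) (hA : IsCompact A) (hreg : DRegular d A)
    (f : ℝ → ℝ) (hf : RieszLike d f) :
    ∃ C : ℝ, ∀ y ∈ A, (∫⁻ x in A, rkernel f x y ∂μH[d]) ≤ ENNReal.ofReal C :=
  hausdorff_potential_bounded_general p d hd A hA hreg f hf
end
end

section
/- Let A ⊂ ℝ^p be a compact d-regular set and f a d-Riesz-like function. If (ν_N) is a sequence of finite positive Borel measures on A converging weak-star to ν, then liminf_N P_f(ν_N) ≥ P_f(ν), where P_f(μ) := inf_{y∈A} U_f^μ(y). -/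
open MeasureTheory Metric Set Filter Topology ENNReal
open scoped Classical

noncomputable section

/-!
Take `c < P_f(ν)` and suppose `P_f(ν_N) ≤ c` along a subsequence. Pick `y_N ∈ A` with
`U^{ν_N}(y_N) < c' < P_f(ν)` and, by compactness, a further subsequence with `y_N → y ∈ A`.
The kernel is the increasing limit of the continuous bounded kernels `f(|x - y| + ε)`, whose
integrals pass to the weak-star limit, and `f(|x - y| + ε) ≤ f(|x - y_N| + ε/2)` as soon as
`|y_N - y| ≤ ε/2`. Hence `U^ν(y) ≤ liminf U^{ν_N}(y_N) ≤ c'` (the principle of descent),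
contradicting `c' < P_f(ν) ≤ U^ν(y)`.
-/

theorem biInf_le_liminf_biInf_of_isSeqCompact {X α : Type*} [TopologicalSpace X]
    [CompleteLinearOrder α] [DenselyOrdered α] {A : Set X} (hA : IsSeqCompact A)
    {g : ℕ → X → α} {g₀ : X → α}
    (hg : ∀ φ : ℕ → ℕ, StrictMono φ → ∀ (y : ℕ → X) (y₀ : X), Tendsto y atTop (𝓝 y₀) →
      g₀ y₀ ≤ liminf (fun k => g (φ k) (y k)) atTop) :
    ⨅ y ∈ A, g₀ y ≤ liminf (fun n => ⨅ y ∈ A, g n y) atTop := by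
  refine (le_liminf_iff).2 fun c hc => ?_
  by_contra hfreq
  obtain ⟨φ, hφ, hφc⟩ := extraction_of_frequently_atTop <|
    (not_eventually.1 hfreq).mono fun n h => not_lt.1 h
  obtain ⟨c', hcc', hc'⟩ := exists_between hc
  have hnear : ∀ k, ∃ y ∈ A, g (φ k) y < c' := fun k => by
    simpa only [iInf_lt_iff, exists_prop] using (hφc k).trans_lt hcc'
  choose y hyA hyc using hnear
  obtain ⟨y₀, hy₀A, ψ, hψ, hlim⟩ := hA hyA
  have hy₀ : g₀ y₀ ≤ c' := (hg (φ ∘ ψ) (hφ.comp hψ) (y ∘ ψ) y₀ hlim).trans <|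
    liminf_le_of_frequently_le' (Frequently.of_forall fun k => (hyc (ψ k)).le)
  exact ((biInf_le g₀ hy₀A).trans hy₀).not_gt hc'

namespace RieszLike

variable {d : ℝ} {f : ℝ → ℝ}

theorem pos (hf : RieszLike d f) {t : ℝ} (ht : 0 < t) : 0 < f t :=
  hf.2.2.1 t ht

theorem apply_le_apply (hf : RieszLike d f) {s t : ℝ} (hs : 0 < s) (hst : s ≤ t) :
    f t ≤ f s :=
  hf.2.1.antitoneOn (mem_Ioi.2 hs) (mem_Ioi.2 (hs.trans_le hst)) hst

section MetricSpace

variable {X : Type*} [PseudoMetricSpace X]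

theorem continuous_dist_add (hf : RieszLike d f) (y : X) {ε : ℝ} (hε : 0 < ε) :
    Continuous fun x => f (dist x y + ε) :=
  hf.1.comp_continuous (by fun_prop) fun _ => add_pos_of_nonneg_of_pos dist_nonneg hε

variable [MeasurableSpace X] [OpensMeasurableSpace X]

theorem integrable_dist_add (hf : RieszLike d f) (μ : Measure X) [IsFiniteMeasure μ] (y : X)
    {ε : ℝ} (hε : 0 < ε) : Integrable (fun x => f (dist x y + ε)) μ := by
  refine .of_bound (hf.continuous_dist_add y hε).aestronglyMeasurable (f ε) (ae_of_all _ ?_)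
  intro x
  have hpos : 0 < dist x y + ε := add_pos_of_nonneg_of_pos dist_nonneg hε
  rw [Real.norm_of_nonneg (hf.pos hpos).le]
  exact hf.apply_le_apply hε (le_add_of_nonneg_left dist_nonneg)

theorem tendsto_lintegral_dist_add (hf : RieszLike d f) {ι : Type*} {l : Filter ι}
    {μ : ι → Measure X} [∀ i, IsFiniteMeasure (μ i)] {μ₀ : Measure X} [IsFiniteMeasure μ₀]
    (hμ : ∀ φ : X → ℝ, Continuous φ → Tendsto (fun i => ∫ x, φ x ∂μ i) l (𝓝 (∫ x, φ x ∂μ₀)))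
    (y : X) {ε : ℝ} (hε : 0 < ε) :
    Tendsto (fun i => ∫⁻ x, ENNReal.ofReal (f (dist x y + ε)) ∂μ i) l
      (𝓝 (∫⁻ x, ENNReal.ofReal (f (dist x y + ε)) ∂μ₀)) := by
  have hlintegral (ν : Measure X) [IsFiniteMeasure ν] :
      ENNReal.ofReal (∫ x, f (dist x y + ε) ∂ν) = ∫⁻ x, ENNReal.ofReal (f (dist x y + ε)) ∂ν :=
    ofReal_integral_eq_lintegral_ofReal (hf.integrable_dist_add ν y hε) <|
      ae_of_all _ fun x => (hf.pos (add_pos_of_nonneg_of_pos dist_nonneg hε)).le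
  rw [← hlintegral]
  exact (ENNReal.tendsto_ofReal (hμ _ (hf.continuous_dist_add y hε))).congr
    fun i => hlintegral (μ i)

end MetricSpace

variable {p : ℕ}

theorem ofReal_dist_add_le_rkernel (hf : RieszLike d f) (x y : EuclideanSpace ℝ (Fin p))
    {ε : ℝ} (hε : 0 < ε) : ENNReal.ofReal (f (dist x y + ε)) ≤ rkernel f x y := by
  unfold rkernel
  split_ifs with h
  · subst h
    rw [dist_self, zero_add]
    exact le_iSup (fun t : {t : ℝ // 0 < t} => ENNReal.ofReal (f t.1)) ⟨ε, hε⟩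
  · exact ENNReal.ofReal_le_ofReal
      (hf.apply_le_apply (dist_pos.2 h) (le_add_of_nonneg_right hε.le))

theorem rkernel_eq_iSup (hf : RieszLike d f) (x y : EuclideanSpace ℝ (Fin p)) :
    rkernel f x y = ⨆ n : ℕ, ENNReal.ofReal (f (dist x y + 1 / (n + 1))) := by
  refine le_antisymm ?_ (iSup_le fun n => hf.ofReal_dist_add_le_rkernel x y (by positivity))
  unfold rkernel
  split_ifs with h
  · subst h
    refine iSup_le fun ⟨t, ht⟩ => ?_
    obtain ⟨n, hn⟩ := exists_nat_one_div_lt ht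
    simp only [dist_self, zero_add]
    exact (ENNReal.ofReal_le_ofReal (hf.apply_le_apply (by positivity) hn.le)).trans
      (le_iSup (fun n : ℕ => ENNReal.ofReal (f (1 / (n + 1)))) n)
  · have hf_cont : ContinuousAt f (dist x y) :=
      hf.1.continuousAt (Ioi_mem_nhds (dist_pos.2 h))
    have hdist : Tendsto (fun n : ℕ => dist x y + 1 / (n + 1)) atTop (𝓝 (dist x y)) := by
      simpa using (tendsto_const_nhds (x := dist x y)).add tendsto_one_div_add_atTop_nhds_zero_nat
    exact le_of_tendsto' (ENNReal.tendsto_ofReal (hf_cont.tendsto.comp hdist))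
      fun n => le_iSup (fun n : ℕ => ENNReal.ofReal (f (dist x y + 1 / (n + 1)))) n

theorem potential_eq_iSup_lintegral (hf : RieszLike d f)
    (μ : Measure (EuclideanSpace ℝ (Fin p))) (y : EuclideanSpace ℝ (Fin p)) :
    potential f μ y = ⨆ n : ℕ, ∫⁻ x, ENNReal.ofReal (f (dist x y + 1 / (n + 1))) ∂μ := by
  have hmono : Monotone fun (n : ℕ) (x : EuclideanSpace ℝ (Fin p)) =>
      ENNReal.ofReal (f (dist x y + 1 / (n + 1))) := fun n m hnm x => by
    refine ENNReal.ofReal_le_ofReal (hf.apply_le_apply (by positivity) ?_)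
    gcongr
  unfold potential
  simp_rw [hf.rkernel_eq_iSup]
  exact lintegral_iSup
    (fun n => (hf.continuous_dist_add y (by positivity)).measurable.ennreal_ofReal) hmono

/-- Principle of descent. -/
theorem potential_le_liminf (hf : RieszLike d f) {ι : Type*} {l : Filter ι} [l.NeBot]
    {μ : ι → Measure (EuclideanSpace ℝ (Fin p))} [∀ i, IsFiniteMeasure (μ i)]
    {μ₀ : Measure (EuclideanSpace ℝ (Fin p))} [IsFiniteMeasure μ₀]
    (hμ : ∀ φ : EuclideanSpace ℝ (Fin p) → ℝ, Continuous φ →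
      Tendsto (fun i => ∫ x, φ x ∂μ i) l (𝓝 (∫ x, φ x ∂μ₀)))
    {y : ι → EuclideanSpace ℝ (Fin p)} {y₀ : EuclideanSpace ℝ (Fin p)} (hy : Tendsto y l (𝓝 y₀)) :
    potential f μ₀ y₀ ≤ liminf (fun i => potential f (μ i) (y i)) l := by
  rw [hf.potential_eq_iSup_lintegral]
  refine iSup_le fun n => ?_
  set ε : ℝ := 1 / (n + 1)
  have hε : 0 < ε := by positivity
  have hbound : ∀ᶠ i in l,
      ∫⁻ x, ENNReal.ofReal (f (dist x y₀ + ε)) ∂μ i ≤ potential f (μ i) (y i) := by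
    filter_upwards [tendsto_nhds.1 hy (ε / 2) (half_pos hε)] with i hi
    refine lintegral_mono fun x => le_trans ?_ (hf.ofReal_dist_add_le_rkernel x (y i) (half_pos hε))
    refine ENNReal.ofReal_le_ofReal (hf.apply_le_apply (by positivity) ?_)
    linarith [dist_triangle_right x (y i) y₀]
  calc ∫⁻ x, ENNReal.ofReal (f (dist x y₀ + ε)) ∂μ₀
      = liminf (fun i => ∫⁻ x, ENNReal.ofReal (f (dist x y₀ + ε)) ∂μ i) l :=
        (hf.tendsto_lintegral_dist_add hμ y₀ hε).liminf_eq.symm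
    _ ≤ liminf (fun i => potential f (μ i) (y i)) l := liminf_le_liminf hbound

end RieszLike

theorem liminf_polar_ge_general (p : ℕ) (d : ℝ)
    (A : Set (EuclideanSpace ℝ (Fin p))) (hA : IsCompact A)
    (f : ℝ → ℝ) (hf : RieszLike d f)
    (ν : ℕ → Measure (EuclideanSpace ℝ (Fin p))) (hfin : ∀ N, IsFiniteMeasure (ν N))
    (νlim : Measure (EuclideanSpace ℝ (Fin p))) [IsFiniteMeasure νlim]
    (hws : ∀ φ : EuclideanSpace ℝ (Fin p) → ℝ, Continuous φ →
      Tendsto (fun N => ∫ x, φ x ∂(ν N)) atTop (nhds (∫ x, φ x ∂νlim))) :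
    polar f A νlim ≤ Filter.liminf (fun N => polar f A (ν N)) atTop :=
  biInf_le_liminf_biInf_of_isSeqCompact hA.isSeqCompact fun _ hφ _ _ hy =>
    hf.potential_le_liminf (fun g hg => (hws g hg).comp hφ.tendsto_atTop) hy

/-- If `ν_N → ν` weak-star on a compact `d`-regular set `A` and `f` is `d`-Riesz-like, then
`liminf_N P_f(ν_N) ≥ P_f(ν)`, where `P_f(μ) = inf_{y ∈ A} U_f^μ(y)`. -/
theorem liminf_polar_ge (p : ℕ) (d : ℝ) (hd : 0 < d) (hdp : d ≤ p)
    (A : Set (EuclideanSpace ℝ (Fin p))) (hA : IsCompact A) (hreg : DRegular d A)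
    (f : ℝ → ℝ) (hf : RieszLike d f)
    (ν : ℕ → Measure (EuclideanSpace ℝ (Fin p))) (hfin : ∀ N, IsFiniteMeasure (ν N))
    (hsupp : ∀ N, ν N Aᶜ = 0)
    (νlim : Measure (EuclideanSpace ℝ (Fin p))) [IsFiniteMeasure νlim] (hνlim : νlim Aᶜ = 0)
    (hws : ∀ φ : EuclideanSpace ℝ (Fin p) → ℝ, Continuous φ →
      Tendsto (fun N => ∫ x, φ x ∂(ν N)) atTop (nhds (∫ x, φ x ∂νlim))) :
    polar f A νlim ≤ Filter.liminf (fun N => polar f A (ν N)) atTop :=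
  liminf_polar_ge_general p d A hA f hf ν hfin νlim hws
end
end

section
/- Let A ⊂ ℝ^p be compact and K : A × A → (−∞,∞] lower semicontinuous, symmetric, bounded below. Then the discrete polarization constants converge to the continuous Chebyshev constant: P_K(A,N) → T_K(A) as N → ∞, where P_K(A,N) = sup over N-point multisets ω_N ⊂ A of inf_{y∈A} (1/N) Σ_{x∈ω_N} K(x,y), and T_K(A) = sup over probability measures μ on A of inf_{y∈A} ∫ K(x,y) dμ(x). -/
/-!
Counting measures of points of `A` are admissible probability measures, so `P_K(A, N) ≤ T_K(A)`.
For the converse, fix a probability measure `μ` on `A` with `a < inf_{y ∈ A} ∫ K(x, y) dμ(x)`.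
Baire's Lipschitz regularizations `K_m q = inf_{r ∈ A × A} (min (K r) m + (m + 1) d(q, r))`
increase to `K` on `A × A` by lower semicontinuity, so by monotone convergence and a Dini
argument on the compact `A` some bounded, Lipschitz `K_m` already has `μ`-potential above `a`
on `A`. Replacing `μ` by its masses on the cells of a fine finite partition of `A` costs little
for such a kernel, and so does rounding these masses to multiples of `1 / N` (an error
`O(m J / N)` for `J` cells). Since `K_m ≤ K`, the resulting `N`-point configuration has
`K`-polarization above `a` for all large `N`.
-/

open MeasureTheory Set Filter Topology ENNReal

noncomputable section

/-- The potential of `μ` with respect to a kernel `K` (values in `[0,∞]`, i.e. a kernel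
bounded below after normalization). -/
def Kpotential {p : ℕ} (K : EuclideanSpace ℝ (Fin p) → EuclideanSpace ℝ (Fin p) → ℝ≥0∞)
    (μ : Measure (EuclideanSpace ℝ (Fin p))) (y : EuclideanSpace ℝ (Fin p)) : ℝ≥0∞ :=
  ∫⁻ x, K x y ∂μ

/-- The `K`-polarization of `μ` on `A`. -/
def Kpolar {p : ℕ} (K : EuclideanSpace ℝ (Fin p) → EuclideanSpace ℝ (Fin p) → ℝ≥0∞)
    (A : Set (EuclideanSpace ℝ (Fin p))) (μ : Measure (EuclideanSpace ℝ (Fin p))) : ℝ≥0∞ :=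
  ⨅ y ∈ A, Kpotential K μ y

/-- The normalized counting measure of an `N`-point multiset `ω`. -/
def counting {p : ℕ} {N : ℕ} (ω : Fin N → EuclideanSpace ℝ (Fin p)) :
    Measure (EuclideanSpace ℝ (Fin p)) :=
  ((N : ℝ≥0∞))⁻¹ • ∑ i, Measure.dirac (ω i)

/-- The discrete `N`-th `K`-polarization (Chebyshev) constant of `A`. -/
def KchebDiscrete {p : ℕ} (K : EuclideanSpace ℝ (Fin p) → EuclideanSpace ℝ (Fin p) → ℝ≥0∞)
    (A : Set (EuclideanSpace ℝ (Fin p))) (N : ℕ) : ℝ≥0∞ :=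
  ⨆ (ω : Fin N → EuclideanSpace ℝ (Fin p)) (_ : ∀ i, ω i ∈ A), Kpolar K A (counting ω)

/-- The continuous Chebyshev constant `T_K(A)`. -/
def KchebCont {p : ℕ} (K : EuclideanSpace ℝ (Fin p) → EuclideanSpace ℝ (Fin p) → ℝ≥0∞)
    (A : Set (EuclideanSpace ℝ (Fin p))) : ℝ≥0∞ :=
  ⨆ (μ : Measure (EuclideanSpace ℝ (Fin p))) (_ : IsProbabilityMeasure μ) (_ : μ Aᶜ = 0),
    Kpolar K A μ

section LipschitzApprox

variable {Y : Type*} [PseudoEMetricSpace Y]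

theorem lowerSemicontinuous_of_le_add_mul_edist {f : Y → ℝ≥0∞} {C : ℝ≥0∞} (hC : C ≠ ∞)
    (h : ∀ y y', f y ≤ f y' + C * edist y y') : LowerSemicontinuous f := by
  intro y t ht
  have hsmall : Tendsto (fun y' => C * edist y y') (𝓝 y) (𝓝 0) := by
    simpa using ENNReal.Tendsto.const_mul
      ((tendsto_const_nhds (x := y)).edist (tendsto_id (x := 𝓝 y))) (Or.inr hC)
  filter_upwards [hsmall.eventually_lt_const (tsub_pos_of_lt ht)] with y' hy'
  by_contra! hle
  have : f y < f y := calc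
    f y ≤ t + C * edist y y' := (h y y').trans (add_le_add_left hle _)
    _ < t + (f y - t) := ENNReal.add_lt_add_left ht.ne_top hy'
    _ = f y := add_tsub_cancel_of_le ht.le
  exact this.false

def lipApprox (F : Y → ℝ≥0∞) (s : Set Y) (m : ℕ) (y : Y) : ℝ≥0∞ :=
  ⨅ r ∈ s, (min (F r) m + (m + 1) * edist y r)

variable {F : Y → ℝ≥0∞} {s : Set Y}

theorem lipApprox_mono (F : Y → ℝ≥0∞) (s : Set Y) (y : Y) :
    Monotone fun m => lipApprox F s m y := fun m m' hm =>
  iInf₂_mono fun r _ => by gcongr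

theorem lipApprox_le_min {y : Y} (hy : y ∈ s) (m : ℕ) : lipApprox F s m y ≤ min (F y) m :=
  (iInf₂_le y hy).trans (by simp)

theorem lipApprox_le_add_edist (F : Y → ℝ≥0∞) (s : Set Y) (m : ℕ) (y y' : Y) :
    lipApprox F s m y ≤ lipApprox F s m y' + (m + 1) * edist y y' := by
  refine tsub_le_iff_right.1 (le_iInf₂ fun r hr => tsub_le_iff_right.2 ?_)
  refine (iInf₂_le r hr).trans ?_
  rw [add_assoc, ← mul_add, add_comm (edist y' r)]
  gcongr
  exact edist_triangle _ _ _

theorem lowerSemicontinuous_lipApprox (F : Y → ℝ≥0∞) (s : Set Y) (m : ℕ) :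
    LowerSemicontinuous (lipApprox F s m) :=
  lowerSemicontinuous_of_le_add_mul_edist (by finiteness) (lipApprox_le_add_edist F s m)

theorem iSup_lipApprox {y : Y} (hF : LowerSemicontinuousWithinAt F s y) (hy : y ∈ s) :
    ⨆ m, lipApprox F s m y = F y := by
  refine le_antisymm (iSup_le fun m => (lipApprox_le_min hy m).trans (min_le_left _ _)) ?_
  refine le_of_forall_lt fun t ht => ?_
  obtain ⟨t', htt', ht'⟩ := exists_between ht
  obtain ⟨δ, hδ, hball⟩ := EMetric.mem_nhdsWithin_iff.1 (hF t' ht')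
  have hlarge : ∀ᶠ m : ℕ in atTop, t' < m ∧ t' < m * δ := by
    have hmδ : Tendsto (fun m : ℕ => (m : ℝ≥0∞) * δ) atTop (𝓝 (∞ * δ)) :=
      ENNReal.Tendsto.mul_const ENNReal.tendsto_nat_nhds_top (Or.inl top_ne_zero)
    rw [ENNReal.top_mul hδ.ne'] at hmδ
    exact (ENNReal.tendsto_nat_nhds_top.eventually_const_lt ht'.ne_top.lt_top).and
      (hmδ.eventually_const_lt ht'.ne_top.lt_top)
  obtain ⟨m, hm, hmδ⟩ := hlarge.exists
  refine htt'.trans_le (le_iSup_of_le m (le_iInf₂ fun r hr => ?_))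
  rcases lt_or_ge (edist r y) δ with hr' | hr'
  · exact le_add_right (le_min (hball ⟨hr', hr⟩).le hm.le)
  · calc t' ≤ m * δ := hmδ.le
      _ ≤ (m + 1) * edist y r := by rw [edist_comm]; gcongr; exact le_self_add
      _ ≤ _ := le_add_self

end LipschitzApprox

theorem IsCompact.exists_forall_lt_of_lt_iSup {X α : Type*} [TopologicalSpace X]
    [CompleteLinearOrder α] {A : Set X} (hA : IsCompact A) {g : ℕ → X → α} (hmono : Monotone g)
    (hg : ∀ m, LowerSemicontinuous (g m)) {b : α} (hb : ∀ y ∈ A, b < ⨆ m, g m y) :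
    ∃ m, ∀ y ∈ A, b < g m y :=
  hA.elim_directed_cover (fun m => {y | b < g m y}) (fun m => (hg m).isOpen_preimage b)
    (fun y hy => mem_iUnion.2 (lt_iSup_iff.1 (hb y hy)))
    (Monotone.directed_le fun _ _ h _ hy => hy.trans_le (hmono h _))

section Discretization

theorem exists_nat_sum_eq_and_le_add_one {ι : Type*} [Fintype ι] (N : ℕ) {w : ι → ℝ≥0∞}
    (hw : ∑ j, w j = 1) : ∃ k : ι → ℕ, ∑ j, k j = N ∧ ∀ j, N * w j ≤ k j + 1 := by
  classical
  obtain ⟨j₀, -, -⟩ := Finset.exists_ne_zero_of_sum_ne_zero (hw ▸ one_ne_zero)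
  have hfin : ∀ j, (N : ℝ≥0∞) * w j ≠ ∞ := fun j =>
    ENNReal.mul_ne_top (by finiteness)
      (ne_top_of_le_ne_top (hw ▸ ENNReal.one_ne_top)
        (Finset.single_le_sum (by simp) (Finset.mem_univ j)))
  set fl : ι → ℕ := fun j => ⌊(N * w j).toNNReal⌋₊
  have hfl : ∑ j, fl j ≤ N := by
    have : (∑ j, fl j : ℝ≥0∞) ≤ N := calc
      (∑ j, fl j : ℝ≥0∞) ≤ ∑ j, (N * w j) := by
        refine Finset.sum_le_sum fun j _ => ?_
        rw [← ENNReal.coe_toNNReal (hfin j)]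
        exact_mod_cast Nat.floor_le (by positivity)
      _ = N := by rw [← Finset.mul_sum, hw, mul_one]
    exact_mod_cast this
  refine ⟨fl + Pi.single j₀ (N - ∑ j, fl j), ?_, fun j => ?_⟩
  · simp only [Pi.add_apply, Finset.sum_add_distrib, Finset.sum_pi_single', Finset.mem_univ,
      if_true]
    omega
  · calc (N : ℝ≥0∞) * w j = ((N * w j).toNNReal : ℝ≥0∞) := (ENNReal.coe_toNNReal (hfin j)).symm
      _ ≤ fl j + 1 := by exact_mod_cast (Nat.lt_floor_add_one _).le
      _ ≤ _ := by gcongr; simp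

theorem exists_fin_sum_eq_sum_mul {ι X : Type*} [Fintype ι] {N : ℕ} (k : ι → ℕ)
    (hk : ∑ j, k j = N) (z : ι → X) :
    ∃ ω : Fin N → X, (∀ i, ∃ j, ω i = z j) ∧
      ∀ f : X → ℝ≥0∞, ∑ i, f (ω i) = ∑ j, k j * f (z j) := by
  have e : (Σ j, Fin (k j)) ≃ Fin N :=
    Fintype.equivFinOfCardEq (by simp [Fintype.card_sigma, hk])
  refine ⟨fun i => z (e.symm i).1, fun i => ⟨_, rfl⟩, fun f => ?_⟩
  rw [e.symm.sum_comp (fun σ => f (z σ.1)), ← Finset.univ_sigma_univ, Finset.sum_sigma]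
  simp [mul_comm]

theorem exists_fin_sum_mul_le {ι X : Type*} [Fintype ι] {N : ℕ} (hN : N ≠ 0) (z : ι → X)
    {w : ι → ℝ≥0∞} (hw : ∑ j, w j = 1) :
    ∃ ω : Fin N → X, (∀ i, ∃ j, ω i = z j) ∧ ∀ f : X → ℝ≥0∞,
      ∑ j, w j * f (z j) ≤ (N : ℝ≥0∞)⁻¹ * (∑ i, f (ω i) + ∑ j, f (z j)) := by
  obtain ⟨k, hkN, hk⟩ := exists_nat_sum_eq_and_le_add_one N hw
  obtain ⟨ω, hωz, hω⟩ := exists_fin_sum_eq_sum_mul k hkN z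
  refine ⟨ω, hωz, fun f => ?_⟩
  have hw_le : ∀ j, w j ≤ (N : ℝ≥0∞)⁻¹ * (k j + 1) := fun j => by
    rw [← ENNReal.inv_mul_cancel_left (a := N) (b := w j) (by simpa using hN) (by simp)]
    gcongr
    exact hk j
  calc ∑ j, w j * f (z j) ≤ ∑ j, (N : ℝ≥0∞)⁻¹ * (k j + 1) * f (z j) := by gcongr; exact hw_le _
    _ = _ := by
      rw [hω, ← Finset.sum_add_distrib, Finset.mul_sum]
      simp only [add_mul, one_mul, mul_assoc]

variable {X : Type*} [PseudoEMetricSpace X] [MeasurableSpace X] [OpensMeasurableSpace X]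
  {A : Set X}

theorem exists_lintegral_le_sum_mul_iSup_eball (hA : IsCompact A) {μ : Measure X}
    (hμA : μ Aᶜ = 0) {δ : ℝ≥0∞} (hδ : 0 < δ) :
    ∃ (J : ℕ) (z : Fin J → X) (w : Fin J → ℝ≥0∞), (∀ j, z j ∈ A) ∧ ∑ j, w j = μ univ ∧
      ∀ f : X → ℝ≥0∞, ∫⁻ x, f x ∂μ ≤ ∑ j, w j * ⨆ x ∈ Metric.eball (z j) δ, f x := by
  obtain ⟨t, htA, hcover⟩ :=
    hA.elim_nhds_subcover (fun x => Metric.eball x δ) fun x _ => Metric.eball_mem_nhds x hδ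
  set z : Fin t.card → X := fun j => t.equivFin.symm j
  set E := disjointed fun j => Metric.eball (z j) δ
  have hE : ∀ j, MeasurableSet (E j) := fun j =>
    disjointedRec (fun _ _ ht => ht.diff Metric.isOpen_eball.measurableSet)
      Metric.isOpen_eball.measurableSet
  have hAE : A ⊆ ⋃ j, E j := by
    rw [iUnion_disjointed]
    intro x hx
    obtain ⟨y, hy, hxy⟩ := mem_iUnion₂.1 (hcover hx)
    exact mem_iUnion.2 ⟨t.equivFin ⟨y, hy⟩, by simpa [z] using hxy⟩
  have hsplit (f : X → ℝ≥0∞) : ∫⁻ x, f x ∂μ = ∑ j, ∫⁻ x in E j, f x ∂μ := calc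
    ∫⁻ x, f x ∂μ = ∫⁻ x in ⋃ j, E j, f x ∂μ := by
      have hae : ∀ᵐ x ∂μ, x ∈ ⋃ j, E j := measure_mono_null (fun x hx hxA => hx (hAE hxA)) hμA
      rw [Measure.restrict_eq_self_of_ae_mem hae]
    _ = ∑' j, ∫⁻ x in E j, f x ∂μ := lintegral_iUnion hE (disjoint_disjointed _) _
    _ = ∑ j, ∫⁻ x in E j, f x ∂μ := tsum_fintype _
  refine ⟨t.card, z, fun j => μ (E j), fun j => htA _ (t.equivFin.symm j).2, ?_, fun f => ?_⟩
  · simpa [setLIntegral_one] using (hsplit 1).symm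
  · rw [hsplit]
    refine Finset.sum_le_sum fun j _ => ?_
    rw [mul_comm, ← setLIntegral_const]
    exact setLIntegral_mono' (hE j) fun x hx =>
      le_iSup₂ (f := fun x (_ : x ∈ Metric.eball (z j) δ) => f x) x (disjointed_subset _ j hx)

end Discretization

section Kernel

variable {X : Type*} [PseudoEMetricSpace X] [MeasurableSpace X] [OpensMeasurableSpace X]
  {A : Set X} (μ : Measure X) [IsProbabilityMeasure μ]

theorem exists_forall_lt_lintegral_lipApprox (hA : IsCompact A) {K : X → X → ℝ≥0∞}
    (hK : LowerSemicontinuousOn (fun q : X × X => K q.1 q.2) (A ×ˢ A)) (hμA : μ Aᶜ = 0)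
    {b : ℝ≥0∞} (hb : ∀ y ∈ A, b < ∫⁻ x, K x y ∂μ) :
    ∃ m, ∀ y ∈ A, b < ∫⁻ x, lipApprox (fun q : X × X => K q.1 q.2) (A ×ˢ A) m (x, y) ∂μ := by
  set F := fun q : X × X => K q.1 q.2
  have hmeas (m : ℕ) (y : X) : Measurable fun x => lipApprox F (A ×ˢ A) m (x, y) :=
    ((lowerSemicontinuous_lipApprox F _ m).comp (Continuous.prodMk_left y)).measurable
  refine hA.exists_forall_lt_of_lt_iSup
    (g := fun m y => ∫⁻ x, lipApprox F (A ×ˢ A) m (x, y) ∂μ)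
    (fun m m' h y => lintegral_mono fun x => lipApprox_mono F _ _ h) (fun m => ?_) fun y hy => ?_
  · refine lowerSemicontinuous_of_le_add_mul_edist (C := m + 1) (by finiteness) fun y y' => ?_
    calc ∫⁻ x, lipApprox F (A ×ˢ A) m (x, y) ∂μ
        ≤ ∫⁻ x, (lipApprox F (A ×ˢ A) m (x, y') + (m + 1) * edist y y') ∂μ :=
          lintegral_mono fun x => by
            simpa [Prod.edist_eq] using lipApprox_le_add_edist F (A ×ˢ A) m (x, y) (x, y')
      _ = _ := by rw [lintegral_add_right _ measurable_const, lintegral_const, measure_univ,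
          mul_one]
  · rw [← lintegral_iSup (hmeas · y) fun m m' h x => lipApprox_mono F _ _ h]
    refine (hb y hy).trans_le (lintegral_mono_ae ?_)
    filter_upwards [show ∀ᵐ x ∂μ, x ∈ A from hμA] with x hx
    exact (iSup_lipApprox (hK _ ⟨hx, hy⟩) ⟨hx, hy⟩).ge

theorem eventually_exists_fin_lintegral_le (hA : IsCompact A) (hμA : μ Aᶜ = 0)
    {k : X → X → ℝ≥0∞} {C M : ℝ≥0∞} (hC : C ≠ ∞) (hM : M ≠ ∞)
    (hk : ∀ x x' y, k x y ≤ k x' y + C * edist x x') (hkM : ∀ x ∈ A, ∀ y ∈ A, k x y ≤ M)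
    {ε : ℝ≥0∞} (hε : 0 < ε) :
    ∀ᶠ N in atTop, ∃ ω : Fin N → X, (∀ i, ω i ∈ A) ∧
      ∀ y ∈ A, ∫⁻ x, k x y ∂μ ≤ (N : ℝ≥0∞)⁻¹ * ∑ i, k (ω i) y + ε := by
  have hε2 : 0 < ε / 2 := ENNReal.half_pos hε.ne'
  -- the radius `ε / 2 / C` is `∞` when `C = 0`, which is harmless
  obtain ⟨J, z, w, hzA, hw, hμ⟩ :=
    exists_lintegral_le_sum_mul_iSup_eball hA hμA (ENNReal.div_pos hε2.ne' hC)
  rw [measure_univ] at hw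
  have hsmall : Tendsto (fun N : ℕ => (N : ℝ≥0∞)⁻¹ * (J * M)) atTop (𝓝 0) := by
    simpa using
      ENNReal.Tendsto.mul_const ENNReal.tendsto_inv_nat_nhds_zero (Or.inr (by finiteness))
  filter_upwards [hsmall.eventually_lt_const hε2, eventually_ne_atTop 0] with N hNε hN
  obtain ⟨ω, hωz, hω⟩ := exists_fin_sum_mul_le hN z hw
  refine ⟨ω, fun i => ?_, fun y hy => ?_⟩
  · obtain ⟨j, hj⟩ := hωz i
    exact hj ▸ hzA j
  have hosc (j : Fin J) : ⨆ x ∈ Metric.eball (z j) (ε / 2 / C), k x y ≤ k (z j) y + ε / 2 :=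
    iSup₂_le fun x hx => (hk x (z j) y).trans (by
      gcongr
      exact (mul_le_mul_right (Metric.mem_eball.1 hx).le C).trans ENNReal.mul_div_le)
  have hzM : ∑ j, k (z j) y ≤ J * M := by
    simpa using Finset.sum_le_sum fun j (_ : j ∈ Finset.univ) => hkM _ (hzA j) y hy
  calc ∫⁻ x, k x y ∂μ ≤ ∑ j, w j * (k (z j) y + ε / 2) := (hμ _).trans (by gcongr; exact hosc _)
    _ = ∑ j, w j * k (z j) y + ε / 2 := by simp only [mul_add, Finset.sum_add_distrib,
        ← Finset.sum_mul, hw, one_mul]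
    _ ≤ (N : ℝ≥0∞)⁻¹ * (∑ i, k (ω i) y + ∑ j, k (z j) y) + ε / 2 := by
        gcongr; exact hω (k · y)
    _ ≤ (N : ℝ≥0∞)⁻¹ * ∑ i, k (ω i) y + (N : ℝ≥0∞)⁻¹ * (J * M) + ε / 2 := by
        rw [mul_add]; gcongr
    _ ≤ (N : ℝ≥0∞)⁻¹ * ∑ i, k (ω i) y + ε := by
        rw [add_assoc]
        grw [hNε.le, ENNReal.add_halves]

end Kernel

section Chebyshev

variable {p N : ℕ} {A : Set (EuclideanSpace ℝ (Fin p))}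
  {K : EuclideanSpace ℝ (Fin p) → EuclideanSpace ℝ (Fin p) → ℝ≥0∞}

theorem lintegral_counting (ω : Fin N → EuclideanSpace ℝ (Fin p))
    (f : EuclideanSpace ℝ (Fin p) → ℝ≥0∞) :
    ∫⁻ x, f x ∂counting ω = (N : ℝ≥0∞)⁻¹ * ∑ i, f (ω i) := by
  simp [counting]

theorem isProbabilityMeasure_counting (hN : N ≠ 0) (ω : Fin N → EuclideanSpace ℝ (Fin p)) :
    IsProbabilityMeasure (counting ω) :=
  ⟨by
    rw [← lintegral_one, lintegral_counting]
    simpa using ENNReal.inv_mul_cancel (Nat.cast_ne_zero.2 hN) (ENNReal.natCast_ne_top N)⟩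

theorem counting_compl_eq_zero (hA : MeasurableSet A) {ω : Fin N → EuclideanSpace ℝ (Fin p)}
    (hω : ∀ i, ω i ∈ A) : counting ω Aᶜ = 0 := by
  simp [counting, Measure.dirac_apply' _ hA.compl, hω]

theorem KchebDiscrete_le_KchebCont (hA : MeasurableSet A) (hN : N ≠ 0) :
    KchebDiscrete K A N ≤ KchebCont K A :=
  iSup₂_le fun ω hω => le_iSup_of_le (counting ω) <|
    le_iSup_of_le (isProbabilityMeasure_counting hN ω) <|
      le_iSup_of_le (counting_compl_eq_zero hA hω) le_rfl

theorem eventually_lt_KchebDiscrete (hA : IsCompact A)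
    (hK : LowerSemicontinuousOn (fun q : EuclideanSpace ℝ (Fin p) × EuclideanSpace ℝ (Fin p) =>
      K q.1 q.2) (A ×ˢ A))
    (μ : Measure (EuclideanSpace ℝ (Fin p))) [IsProbabilityMeasure μ] (hμA : μ Aᶜ = 0)
    {a : ℝ≥0∞} (ha : a < Kpolar K A μ) : ∀ᶠ N in atTop, a < KchebDiscrete K A N := by
  obtain ⟨c₁, hac₁, hc₁⟩ := exists_between ha
  obtain ⟨c₂, hc₁₂, hc₂⟩ := exists_between hc₁
  obtain ⟨m, hm⟩ := exists_forall_lt_lintegral_lipApprox μ hA hK hμA fun y hy =>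
    hc₂.trans_le (iInf₂_le y hy)
  set k := fun x y => lipApprox (fun q => K q.1 q.2) (A ×ˢ A) m (x, y)
  have hkK : ∀ x ∈ A, ∀ y ∈ A, k x y ≤ min (K x y) m := fun x hx y hy =>
    lipApprox_le_min (mk_mem_prod hx hy) m
  filter_upwards [eventually_exists_fin_lintegral_le μ hA hμA (k := k) (C := m + 1) (M := m)
    (by finiteness) (by finiteness)
    (fun x x' y => by simpa [Prod.edist_eq] using lipApprox_le_add_edist _ _ m (x, y) (x', y))
    (fun x hx y hy => (hkK x hx y hy).trans (min_le_right _ _)) (tsub_pos_of_lt hc₁₂)]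
    with N hN
  obtain ⟨ω, hωA, hω⟩ := hN
  have hpolar : c₁ ≤ Kpolar K A (counting ω) := le_iInf₂ fun y hy => by
    have : c₂ ≤ Kpotential K (counting ω) y + (c₂ - c₁) := calc
      c₂ ≤ ∫⁻ x, k x y ∂μ := (hm y hy).le
      _ ≤ (N : ℝ≥0∞)⁻¹ * ∑ i, k (ω i) y + (c₂ - c₁) := hω y hy
      _ ≤ _ := by
        rw [Kpotential, lintegral_counting]
        gcongr with i
        exact (hkK _ (hωA i) y hy).trans (min_le_left _ _)
    rwa [← tsub_le_iff_right, ENNReal.sub_sub_cancel hc₂.ne_top hc₁₂.le] at this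
  exact hac₁.trans_le (hpolar.trans (le_iSup₂ (f := fun ω (_ : ∀ i, ω i ∈ A) =>
    Kpolar K A (counting ω)) ω hωA))

end Chebyshev

theorem ohtsuka_general (p : ℕ) (A : Set (EuclideanSpace ℝ (Fin p))) (hA : IsCompact A)
    (K : EuclideanSpace ℝ (Fin p) → EuclideanSpace ℝ (Fin p) → ℝ≥0∞)
    (hK : LowerSemicontinuousOn (fun q : EuclideanSpace ℝ (Fin p) × EuclideanSpace ℝ (Fin p) =>
      K q.1 q.2) (A ×ˢ A)) :
    Tendsto (fun N => KchebDiscrete K A N) atTop (nhds (KchebCont K A)) := by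
  refine tendsto_order.2 ⟨fun a ha => ?_, fun a ha => ?_⟩
  · simp only [KchebCont, lt_iSup_iff] at ha
    obtain ⟨μ, hμ, hμA, ha⟩ := ha
    exact eventually_lt_KchebDiscrete hA hK μ hμA ha
  · filter_upwards [eventually_ne_atTop 0] with N hN
    exact (KchebDiscrete_le_KchebCont hA.isClosed.measurableSet hN).trans_lt ha

/-- Ohtsuka's theorem: for a compact set `A` and a lower semicontinuous symmetric kernel `K`
(bounded below), the discrete polarization constants converge to the continuous Chebyshev
constant: `P_K(A, N) → T_K(A)` as `N → ∞`. -/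
theorem ohtsuka (p : ℕ) (A : Set (EuclideanSpace ℝ (Fin p))) (hA : IsCompact A)
    (hne : A.Nonempty)
    (K : EuclideanSpace ℝ (Fin p) → EuclideanSpace ℝ (Fin p) → ℝ≥0∞)
    (hK : LowerSemicontinuousOn (fun q : EuclideanSpace ℝ (Fin p) × EuclideanSpace ℝ (Fin p) =>
      K q.1 q.2) (A ×ˢ A))
    (hsymm : ∀ x y, K x y = K y x) :
    Tendsto (fun N => KchebDiscrete K A N) atTop (nhds (KchebCont K A)) :=
  ohtsuka_general p A hA K hK
end
end
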